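/- Let C be a subcoalgebra of a coalgebra D over a field k, let g, h be grouplike elements of C, and let v ∈ D satisfy Δ(v) = v ⊗ h + g ⊗ v + w with w ∈ C ⊗ C. Then: (1) w ∈ Z^2_{g,h}(C); (2) w ∈ B^2_{g,h}(C) if and only if there exists f ∈ C such that v − f is an (h,g)-primitive element of D; (3) if P^2_{g,h}(C) = 0, then there exists f ∈ C such that v − f is (h,g)-primitive. -/

import Mathlib

/-!
Coassociativity of `Δ v = v ⊗ h + g ⊗ v + w`, with `g, h` grouplike, reduces to `∂² w = 0`
in `D`; since `ι ⊗ ι ⊗ ι` is injective (everything is flat over a field), `w` is a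
cocycle of `C`. Likewise `v - f` is `(h, g)`-primitive exactly when `∂¹(-f) = w`, so the
choices of `f` correspond to the ways of writing `w` as a coboundary.
-/

open TensorProduct

universe u

namespace PrimCohPaper

/-- A bundled `k`-module in universe `u`. -/
structure Mod' (k : Type u) [CommRing k] : Type (u + 1) where
  carrier : Type u
  [isAddCommGroup : AddCommGroup carrier]
  [isModule : Module k carrier]

attribute [instance] Mod'.isAddCommGroup Mod'.isModule

instance (k : Type u) [CommRing k] : CoeSort (Mod' k) (Type u) :=
  ⟨Mod'.carrier⟩

section Core

variable (k : Type u) [CommRing k] (C : Type u) [AddCommGroup C] [Module k C]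

/-- The `n`-th tensor power `C^{⊗ n}` of `C`, bundled. -/
noncomputable def TpowM : ℕ → Mod' k
  | 0 => { carrier := k }
  | n + 1 => { carrier := C ⊗[k] (TpowM n : Type u) }

/-- The `n`-th tensor power `C^{⊗ n}` of `C` (with `Tpow 0 = k` and
`Tpow (n+1) = C ⊗ Tpow n`). -/
noncomputable abbrev Tpow (n : ℕ) : Type u := (TpowM k C n : Type u)

/-- `x ↦ g ⊗ x`. -/
noncomputable def gLeft (g : C) (n : ℕ) : Tpow k C n →ₗ[k] Tpow k C (n + 1) :=
  TensorProduct.mk k C (Tpow k C n) g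

/-- `x ↦ x ⊗ h`. -/
noncomputable def hRight (h : C) : ∀ n : ℕ, Tpow k C n →ₗ[k] Tpow k C (n + 1)
  | 0 => TensorProduct.mk k C k h
  | n + 1 => LinearMap.lTensor C (hRight h n)

variable [Coalgebra k C]

/-- Apply the comultiplication in the leftmost slot. -/
noncomputable def deltaLeft (n : ℕ) : Tpow k C (n + 1) →ₗ[k] Tpow k C (n + 2) :=
  (TensorProduct.assoc k C C (Tpow k C n)).toLinearMap ∘ₗ
    LinearMap.rTensor (Tpow k C n) (Coalgebra.comul (R := k) (A := C))

/-- The alternating sum `Σ_{i=0}^{n-1} (-1)^i Id^{⊗i} ⊗ Δ ⊗ Id^{⊗(n-i-1)}`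
(the Hochschild-type differential `D_n`). -/
noncomputable def Dmap : ∀ n : ℕ, Tpow k C n →ₗ[k] Tpow k C (n + 1)
  | 0 => 0
  | n + 1 =>
    deltaLeft k C n -
      (show Tpow k C (n + 1) →ₗ[k] Tpow k C (n + 2) from LinearMap.lTensor C (Dmap n))

/-- The cobar-type differential
`∂^n_{g,h} = g ⊗ Id^{⊗n} − D_n + (−1)^{n+1} Id^{⊗n} ⊗ h`
of Stefan–Van Oystaeyen (with `∂^0_{g,h}(1) = g − h`). -/
noncomputable def cobar (g h : C) (n : ℕ) : Tpow k C n →ₗ[k] Tpow k C (n + 1) :=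
  gLeft k C g n - Dmap k C n + ((-1 : ℤ) ^ (n + 1)) • hRight k C h n

/-- Cocycles `Z^n_{g,h}(C) = ker ∂^n_{g,h}`. -/
noncomputable def Zc (g h : C) (n : ℕ) : Submodule k (Tpow k C n) :=
  LinearMap.ker (cobar k C g h n)

/-- Coboundaries `B^n_{g,h}(C) = im ∂^{n-1}_{g,h}` (zero for `n = 0`). -/
noncomputable def Bc (g h : C) : ∀ n : ℕ, Submodule k (Tpow k C n)
  | 0 => ⊥
  | n + 1 => LinearMap.range (cobar k C g h n)

/-- The `n`-th primitive cohomology `𝔓^n_{g,h}(C) = Z^n_{g,h}(C)/B^n_{g,h}(C)`. -/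
noncomputable abbrev PrimCoh (g h : C) (n : ℕ) : Type u :=
  Zc k C g h n ⧸ (Bc k C g h n).comap (Zc k C g h n).subtype

/-- A grouplike element of a coalgebra: `Δ(g) = g ⊗ g` and `ε(g) = 1`. -/
def IsGrouplike (g : C) : Prop :=
  Coalgebra.comul (R := k) g = g ⊗ₜ[k] g ∧ Coalgebra.counit (R := k) g = (1 : k)

/-- The primitive cohomological dimension of a coalgebra: the supremum of all `n` with
`𝔓^n_{g,h}(C) ≠ 0` for some grouplike `g, h` (equal to `⊥ = -∞` if `C` has no grouplike
elements). -/
noncomputable def PCdim : WithBot ℕ∞ :=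
  ⨆ (n : ℕ) (g : C) (h : C) (_ : IsGrouplike k C g) (_ : IsGrouplike k C h)
    (_ : Nontrivial (PrimCoh k C g h n)), (n : WithBot ℕ∞)

/-- The identification `C ≃ C^{⊗1}`. -/
noncomputable def t1equiv : C ≃ₗ[k] Tpow k C 1 :=
  (TensorProduct.rid k C).symm

/-- The identification `C ⊗ C ≃ C^{⊗2}`. -/
noncomputable def t2equiv : (C ⊗[k] C) ≃ₗ[k] Tpow k C 2 :=
  TensorProduct.congr (LinearEquiv.refl k C) (t1equiv k C)

end Core

section TensorDifferentials

variable (k : Type*) [CommRing k] (C : Type*) [AddCommGroup C] [Module k C] [Coalgebra k C]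

/-- `∂¹_{g,h}` on `C` itself, without the bracketing of `Tpow`. -/
noncomputable def cobarOne (g h : C) : C →ₗ[k] C ⊗[k] C :=
  TensorProduct.mk k C C g - Coalgebra.comul + (TensorProduct.mk k C C).flip h

/-- `∂²_{g,h}` on `C ⊗ C`, without the bracketing of `Tpow`. -/
noncomputable def cobarTwo (g h : C) : C ⊗[k] C →ₗ[k] C ⊗[k] (C ⊗[k] C) :=
  TensorProduct.mk k C (C ⊗[k] C) g
    - (TensorProduct.assoc k C C C).toLinearMap ∘ₗ LinearMap.rTensor C Coalgebra.comul
    + LinearMap.lTensor C Coalgebra.comul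
    - LinearMap.lTensor C ((TensorProduct.mk k C C).flip h)

variable {k C}

theorem cobarOne_apply (g h x : C) :
    cobarOne k C g h x = g ⊗ₜ[k] x - Coalgebra.comul x + x ⊗ₜ[k] h :=
  rfl

theorem cobarTwo_tmul (g h x y : C) :
    cobarTwo k C g h (x ⊗ₜ[k] y) =
      g ⊗ₜ[k] (x ⊗ₜ[k] y) - TensorProduct.assoc k C C C (Coalgebra.comul x ⊗ₜ[k] y)
        + x ⊗ₜ[k] Coalgebra.comul y - x ⊗ₜ[k] (y ⊗ₜ[k] h) :=
  rfl

end TensorDifferentials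

section TensorPowers

variable {k : Type u} [CommRing k] {C : Type u} [AddCommGroup C] [Module k C]

variable (k C) in
noncomputable def t3equiv : (C ⊗[k] (C ⊗[k] C)) ≃ₗ[k] Tpow k C 3 :=
  TensorProduct.congr (LinearEquiv.refl k C) (t2equiv k C)

theorem assoc_tmul_one_eq_t2equiv (u : C ⊗[k] C) :
    TensorProduct.assoc k C C (Tpow k C 0) (u ⊗ₜ[k] (1 : k)) = t2equiv k C u := by
  have key : (TensorProduct.assoc k C C (Tpow k C 0)).toLinearMap ∘ₗ
      (TensorProduct.mk k (C ⊗[k] C) (Tpow k C 0)).flip (1 : k) = (t2equiv k C).toLinearMap :=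
    TensorProduct.ext' fun _ _ => rfl
  exact LinearMap.congr_fun key u

theorem assoc_tmul_t1equiv (u : C ⊗[k] C) (y : C) :
    TensorProduct.assoc k C C (Tpow k C 1) (u ⊗ₜ[k] t1equiv k C y) =
      t3equiv k C (TensorProduct.assoc k C C C (u ⊗ₜ[k] y)) := by
  have key : (TensorProduct.assoc k C C (Tpow k C 1)).toLinearMap ∘ₗ
      (TensorProduct.mk k (C ⊗[k] C) (Tpow k C 1)).flip (t1equiv k C y) =
        (t3equiv k C).toLinearMap ∘ₗ (TensorProduct.assoc k C C C).toLinearMap ∘ₗ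
          (TensorProduct.mk k (C ⊗[k] C) C).flip y :=
    TensorProduct.ext' fun _ _ => rfl
  exact LinearMap.congr_fun key u

variable [Coalgebra k C]

theorem deltaLeft_zero_t1equiv (y : C) :
    deltaLeft k C 0 (t1equiv k C y) = t2equiv k C (Coalgebra.comul y) :=
  (congrArg _ (LinearMap.rTensor_tmul _ _ _ _)).trans (assoc_tmul_one_eq_t2equiv _)

theorem deltaLeft_one_t2equiv (x y : C) :
    deltaLeft k C 1 (t2equiv k C (x ⊗ₜ[k] y)) =
      t3equiv k C (TensorProduct.assoc k C C C (Coalgebra.comul x ⊗ₜ[k] y)) := by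
  change TensorProduct.assoc k C C (Tpow k C 1)
    (LinearMap.rTensor (Tpow k C 1) Coalgebra.comul (x ⊗ₜ[k] t1equiv k C y)) = _
  rw [LinearMap.rTensor_tmul, assoc_tmul_t1equiv]

theorem Dmap_one_t1equiv (y : C) :
    Dmap k C 1 (t1equiv k C y) = t2equiv k C (Coalgebra.comul y) := by
  rw [Dmap, LinearMap.sub_apply, deltaLeft_zero_t1equiv, sub_eq_self]
  exact LinearMap.congr_fun (LinearMap.lTensor_zero C) _

theorem Dmap_two_t2equiv (x y : C) :
    Dmap k C 2 (t2equiv k C (x ⊗ₜ[k] y)) =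
      t3equiv k C (TensorProduct.assoc k C C C (Coalgebra.comul x ⊗ₜ[k] y) -
        x ⊗ₜ[k] Coalgebra.comul y) := by
  rw [Dmap, LinearMap.sub_apply, deltaLeft_one_t2equiv, map_sub]
  exact congrArg (_ - ·) (congrArg (x ⊗ₜ[k] ·) (Dmap_one_t1equiv y))

theorem cobar_one_t1equiv (g h x : C) :
    cobar k C g h 1 (t1equiv k C x) = t2equiv k C (cobarOne k C g h x) := by
  have hg : gLeft k C g 1 (t1equiv k C x) = t2equiv k C (g ⊗ₜ[k] x) := rfl
  have hh : hRight k C h 1 (t1equiv k C x) = t2equiv k C (x ⊗ₜ[k] h) := rfl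
  rw [cobar, LinearMap.add_apply, LinearMap.sub_apply, LinearMap.smul_apply, hg, hh,
    Dmap_one_t1equiv, cobarOne_apply, map_add, map_sub]
  rw [show (-1 : ℤ) ^ (1 + 1) = 1 by norm_num, one_zsmul]

theorem cobar_two_t2equiv (g h : C) (z : C ⊗[k] C) :
    cobar k C g h 2 (t2equiv k C z) = t3equiv k C (cobarTwo k C g h z) := by
  induction z using TensorProduct.induction_on with
  | zero => simp
  | tmul x y =>
    have hg : gLeft k C g 2 (t2equiv k C (x ⊗ₜ[k] y)) = t3equiv k C (g ⊗ₜ[k] (x ⊗ₜ[k] y)) := rfl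
    have hh : hRight k C h 2 (t2equiv k C (x ⊗ₜ[k] y)) =
        t3equiv k C (x ⊗ₜ[k] (y ⊗ₜ[k] h)) := rfl
    rw [cobar, LinearMap.add_apply, LinearMap.sub_apply, LinearMap.smul_apply, hg, hh,
      Dmap_two_t2equiv, cobarTwo_tmul]
    rw [show (-1 : ℤ) ^ (2 + 1) = -1 by norm_num, neg_one_zsmul]
    simp only [map_add, map_sub]
    abel
  | add a b ha hb => simp only [map_add, ha, hb]

end TensorPowers

theorem IsGrouplike.map {k C D : Type u} [CommRing k]
    [AddCommGroup C] [Module k C] [Coalgebra k C]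
    [AddCommGroup D] [Module k D] [Coalgebra k D]
    (φ : C →ₗc[k] D) {g : C} (hg : IsGrouplike k C g) : IsGrouplike k D (φ g) :=
  ⟨by rw [← CoalgHomClass.map_comp_comul_apply, hg.1, TensorProduct.map_tmul]; rfl,
    by rw [CoalgHomClass.counit_comp_apply, hg.2]⟩

section Naturality

variable {k : Type*} [CommRing k] {C D : Type*}
  [AddCommGroup C] [Module k C] [AddCommGroup D] [Module k D]

theorem map_assoc_tmul (φ : C →ₗ[k] D) (u : C ⊗[k] C) (y : C) :
    TensorProduct.map φ (TensorProduct.map φ φ) (TensorProduct.assoc k C C C (u ⊗ₜ[k] y)) =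
      TensorProduct.assoc k D D D (TensorProduct.map φ φ u ⊗ₜ[k] φ y) := by
  induction u using TensorProduct.induction_on with
  | zero => simp
  | tmul a b => simp
  | add a b ha hb => simp only [add_tmul, map_add, ha, hb]

variable [Coalgebra k C] [Coalgebra k D]

theorem map_cobarOne (φ : C →ₗc[k] D) (g h x : C) :
    TensorProduct.map φ.toLinearMap φ.toLinearMap (cobarOne k C g h x) =
      cobarOne k D (φ g) (φ h) (φ x) := by
  simp [cobarOne_apply]

theorem map_cobarTwo (φ : C →ₗc[k] D) (g h : C) (z : C ⊗[k] C) :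
    TensorProduct.map φ.toLinearMap (TensorProduct.map φ.toLinearMap φ.toLinearMap)
        (cobarTwo k C g h z) =
      cobarTwo k D (φ g) (φ h) (TensorProduct.map φ.toLinearMap φ.toLinearMap z) := by
  have map_comul (a : C) : TensorProduct.map φ.toLinearMap φ.toLinearMap
      (Coalgebra.comul a) = Coalgebra.comul (φ a) :=
    CoalgHomClass.map_comp_comul_apply φ a
  induction z using TensorProduct.induction_on with
  | zero => simp
  | tmul x y =>
    simp only [cobarTwo_tmul, map_sub, map_add, map_assoc_tmul, TensorProduct.map_tmul,
      map_comul]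
    rfl
  | add a b ha hb => simp only [map_add, ha, hb]

end Naturality

section SkewPrimitive

variable {k : Type*} [CommRing k] {D : Type*} [AddCommGroup D] [Module k D]

theorem assoc_tmul_eq_lTensor {M : Type*} [AddCommGroup M] [Module k M] (m : M)
    (z : D ⊗[k] D) :
    TensorProduct.assoc k D D M (z ⊗ₜ[k] m) =
      LinearMap.lTensor D ((TensorProduct.mk k D M).flip m) z := by
  induction z using TensorProduct.induction_on with
  | zero => simp
  | tmul a b => simp
  | add a b ha hb => simp [add_tmul, ha, hb]

variable [Coalgebra k D] {g h v : D} {W : D ⊗[k] D}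

/-- Expanding coassociativity `(Δ ⊗ id) Δ v = (id ⊗ Δ) Δ v` for the given `Δ v`, the terms
not involving `W` cancel and what remains is `∂² W = 0`. -/
theorem cobarTwo_eq_zero_of_comul_eq (hg : Coalgebra.comul (R := k) g = g ⊗ₜ[k] g)
    (hh : Coalgebra.comul (R := k) h = h ⊗ₜ[k] h)
    (hv : Coalgebra.comul v = v ⊗ₜ[k] h + g ⊗ₜ[k] v + W) :
    cobarTwo k D g h W = 0 := by
  have coassoc := Coalgebra.coassoc_apply (R := k) v
  simp only [hv, map_add, LinearMap.rTensor_tmul, LinearMap.lTensor_tmul, hg, hh,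
    add_tmul, tmul_add, assoc_tmul_eq_lTensor, LinearMap.flip_apply,
    TensorProduct.mk_apply] at coassoc
  simp only [cobarTwo, LinearMap.sub_apply, LinearMap.add_apply, LinearMap.comp_apply,
    TensorProduct.mk_apply, LinearEquiv.coe_coe]
  rw [eq_comm, ← sub_eq_zero] at coassoc
  rw [← coassoc]
  abel

theorem comul_sub_eq_iff (hv : Coalgebra.comul v = v ⊗ₜ[k] h + g ⊗ₜ[k] v + W) (u : D) :
    Coalgebra.comul (R := k) (v - u) = (v - u) ⊗ₜ[k] h + g ⊗ₜ[k] (v - u) ↔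
      cobarOne k D g h (-u) = W := by
  have defect : Coalgebra.comul (R := k) (v - u) - ((v - u) ⊗ₜ[k] h + g ⊗ₜ[k] (v - u)) =
      W - cobarOne k D g h (-u) := by
    rw [map_sub, hv, cobarOne_apply, map_neg, tmul_neg, neg_tmul, sub_tmul, tmul_sub]
    abel
  rw [← sub_eq_zero, defect, sub_eq_zero, eq_comm]

end SkewPrimitive

section Cohomology

variable {k : Type u} [CommRing k] {C : Type u} [AddCommGroup C] [Module k C] [Coalgebra k C]
  {g h : C}

theorem t2equiv_mem_Zc_two_iff (w : C ⊗[k] C) :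
    t2equiv k C w ∈ Zc k C g h 2 ↔ cobarTwo k C g h w = 0 := by
  rw [Zc, LinearMap.mem_ker, cobar_two_t2equiv, LinearEquiv.map_eq_zero_iff]

theorem t2equiv_mem_Bc_two_iff (w : C ⊗[k] C) :
    t2equiv k C w ∈ Bc k C g h 2 ↔ ∃ f : C, cobarOne k C g h f = w := by
  rw [Bc, LinearMap.mem_range, (t1equiv k C).surjective.exists]
  simp only [cobar_one_t1equiv, (t2equiv k C).injective.eq_iff]

theorem mem_Bc_of_subsingleton_primCoh {n : ℕ} [Subsingleton (PrimCoh k C g h n)]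
    {x : Tpow k C n} (hx : x ∈ Zc k C g h n) : x ∈ Bc k C g h n := by
  have hB : (Bc k C g h n).comap (Zc k C g h n).subtype = ⊤ :=
    Submodule.Quotient.subsingleton_iff.mp ‹_›
  have hx' : (⟨x, hx⟩ : Zc k C g h n) ∈ (Bc k C g h n).comap (Zc k C g h n).subtype :=
    hB ▸ Submodule.mem_top
  exact hx'

end Cohomology

/-- **Statement 8** (Lemma 2.3).
Let `ι : C → D` be an injective coalgebra map (so `C` is a subcoalgebra of `D`), let
`g, h` be grouplike elements of `C`, and let `v ∈ D` satisfy
`Δ(v) = v ⊗ h + g ⊗ v + w` with `w ∈ C ⊗ C`. Then: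
(1) `w ∈ Z²_{g,h}(C)`;
(2) `w ∈ B²_{g,h}(C)` iff there is `f ∈ C` with `v − f` an `(h,g)`-primitive element of `D`;
(3) if `𝔓²_{g,h}(C) = 0` then there is `f ∈ C` with `v − f` an `(h,g)`-primitive. -/
theorem subcoalgebra_two_cocycle
    (k : Type u) [Field k] (C D : Type u)
    [AddCommGroup C] [Module k C] [Coalgebra k C]
    [AddCommGroup D] [Module k D] [Coalgebra k D]
    (ι : C →ₗc[k] D) (hι : Function.Injective ι)
    (g h : C) (hg : IsGrouplike k C g) (hh : IsGrouplike k C h)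
    (v : D) (w : C ⊗[k] C)
    (hv : Coalgebra.comul (R := k) v =
      v ⊗ₜ[k] ι h + (ι g) ⊗ₜ[k] v + TensorProduct.map ι.toLinearMap ι.toLinearMap w) :
    (t2equiv k C w ∈ Zc k C g h 2) ∧
    (t2equiv k C w ∈ Bc k C g h 2 ↔
      ∃ f : C, Coalgebra.comul (R := k) (v - ι f) =
        (v - ι f) ⊗ₜ[k] ι h + (ι g) ⊗ₜ[k] (v - ι f)) ∧
    (Subsingleton (PrimCoh k C g h 2) →
      ∃ f : C, Coalgebra.comul (R := k) (v - ι f) =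
        (v - ι f) ⊗ₜ[k] ι h + (ι g) ⊗ₜ[k] (v - ι f)) := by
  have hι₂ : Function.Injective (TensorProduct.map ι.toLinearMap ι.toLinearMap) :=
    TensorProduct.map_injective_of_flat_flat _ _ hι hι
  have hι₃ := TensorProduct.map_injective_of_flat_flat _ _ hι hι₂
  have hZ : t2equiv k C w ∈ Zc k C g h 2 := by
    rw [t2equiv_mem_Zc_two_iff]
    apply hι₃
    rw [map_cobarTwo, map_zero]
    exact cobarTwo_eq_zero_of_comul_eq (hg.map ι).1 (hh.map ι).1 hv
  have hB : t2equiv k C w ∈ Bc k C g h 2 ↔ ∃ f : C, Coalgebra.comul (R := k) (v - ι f) =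
      (v - ι f) ⊗ₜ[k] ι h + (ι g) ⊗ₜ[k] (v - ι f) := by
    rw [t2equiv_mem_Bc_two_iff, neg_surjective.exists]
    refine exists_congr fun f => ?_
    rw [comul_sub_eq_iff hv, ← map_neg, ← map_cobarOne, hι₂.eq_iff]
  exact ⟨hZ, hB, fun _ => hB.mp (mem_Bc_of_subsingleton_primCoh hZ)⟩

end PrimCohPaper
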